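/- For all real numbers s and t, define β₁ = t, β₂ = s, β₃ = s/22 + 12/11, α₀ = −1/22 − s/528 + t/24, α₁ = 5/22 + 9s/176 − 9t/8, α₂ = −9/22 − 201s/176 + 9t/8, α₃ = −17/22 + 577s/528 − t/24. Then for every real polynomial p of degree at most 4, every Δt > 0 and every t_n ∈ ℝ: p(t_n + Δt/2) + α₃·p(t_n − Δt/2) + α₂·p(t_n − 3Δt/2) + α₁·p(t_n − 5Δt/2) + α₀·p(t_n − 7Δt/2) = Δt·(β₃·p′(t_n) + β₂·p′(t_n − Δt) + β₁·p′(t_n − 2Δt)), where p′ denotes the derivative of p. -/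
import Mathlib


open Polynomial

/-- The fourth-order staggered free-parameter multistep method of Ghrist et al.
(used in the paper's CFM-4th scheme) is exact on polynomials of degree at most 4,
for every choice of the free parameters `s` and `t`. -/
theorem staggered_multistep_exact_on_deg_le_four (s t : ℝ)
    (p : Polynomial ℝ) (hp : p.degree ≤ 4) (Δt : ℝ) (hΔt : 0 < Δt) (tn : ℝ) :
    p.eval (tn + Δt / 2)
      + (-17/22 + 577/528 * s - t/24) * p.eval (tn - Δt / 2)
      + (-9/22 - 201/176 * s + 9/8 * t) * p.eval (tn - 3 * Δt / 2)
      + (5/22 + 9/176 * s - 9/8 * t) * p.eval (tn - 5 * Δt / 2)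
      + (-1/22 - 1/528 * s + 1/24 * t) * p.eval (tn - 7 * Δt / 2)
      = Δt * ((s/22 + 12/11) * (derivative p).eval tn
              + s * (derivative p).eval (tn - Δt)
              + t * (derivative p).eval (tn - 2 * Δt)) := by
  have hn4 : p.natDegree ≤ 4 := Polynomial.natDegree_le_iff_degree_le.mpr hp
  have hn : p.natDegree < 5 := by omega
  have h5 : p.coeff 5 = 0 := Polynomial.coeff_eq_zero_of_natDegree_lt (by omega)
  have hd : (derivative p).natDegree < 5 :=
    lt_of_le_of_lt (Polynomial.natDegree_derivative_le p) (by omega)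
  have hev : ∀ x : ℝ, p.eval x = ∑ i ∈ Finset.range 5, p.coeff i * x ^ i := fun x =>
    Polynomial.eval_eq_sum_range' hn x
  have hev' : ∀ x : ℝ, (derivative p).eval x
      = ∑ i ∈ Finset.range 5, (derivative p).coeff i * x ^ i := fun x =>
    Polynomial.eval_eq_sum_range' hd x
  simp only [hev, hev', Finset.sum_range_succ, Finset.sum_range_zero,
    Polynomial.coeff_derivative, h5]
  push_cast
  ring
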